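/- Let H be a Hopf algebra and A a left H-module algebra. Define the action of h ∈ H on the smash product A ⋊ H by h ⇀ (a ⋊ g) = a ⋊ (h ⇀ g), where, given a Hopf algebra K in duality with H via a pairing ⟨-,-⟩, the element u ∈ K acts by u ⇀ g = g₁⟨u, g₂⟩. This makes A ⋊ H a left K-module algebra whose invariant subalgebra contains A ⋊ 1; in particular, u·((a ⋊ h)(b ⋊ g)) = (u₁·(a ⋊ h))(u₂·(b ⋊ g)) and u·(a ⋊ 1) = ε(u)(a ⋊ 1). -/

import Mathlib

open TensorProduct LinearMap

noncomputable section

variable (k : Type*) [Field k]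

/-- Convolution product of two linear maps from a coalgebra `H` to an algebra `B`. -/
def conv {H B : Type*} [AddCommMonoid H] [Module k H] [CoalgebraStruct k H]
    [Ring B] [Algebra k B] (f g : H →ₗ[k] B) : H →ₗ[k] B :=
  LinearMap.mul' k B ∘ₗ TensorProduct.map f g ∘ₗ CoalgebraStruct.comul

variable (H A : Type*) [Ring H] [HopfAlgebra k H] [Ring A] [Algebra k A]

/-- The uncurried version of an action map. -/
def actU (act : H →ₗ[k] A →ₗ[k] A) : H ⊗[k] A →ₗ[k] A := TensorProduct.lift act

/-- `A` is a left `H`-module algebra via `act`. The measuring condition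
`h • (a b) = (h₁ • a)(h₂ • b)` is expressed at the level of linear maps. -/
structure IsModAlg (act : H →ₗ[k] A →ₗ[k] A) : Prop where
  act_one : act 1 = LinearMap.id
  act_mul : ∀ h g : H, act (h * g) = act h ∘ₗ act g
  smul_mul :
    actU k H A act ∘ₗ lTensor H (LinearMap.mul' k A)
      = LinearMap.mul' k A
          ∘ₗ TensorProduct.map (actU k H A act) (actU k H A act)
          ∘ₗ (TensorProduct.tensorTensorTensorComm k H H A A).toLinearMap
          ∘ₗ rTensor (A ⊗[k] A) (Coalgebra.comul (R := k))
  smul_one : ∀ h : H, act h 1 = Coalgebra.counit (R := k) h • (1 : A)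

variable (B : Type*) [Ring B] [Algebra k B]

/-- `B` is the smash product `A ⋊ H`, with `ιA a = a ⋊ 1`, `ιH h = 1 ⋊ h`,
`e (a ⊗ h) = a ⋊ h`, and the straightening rule `(1 ⋊ h)(a ⋊ 1) = (h₁ • a) ⋊ h₂`. -/
structure IsSmash (act : H →ₗ[k] A →ₗ[k] A) (ιA : A →ₐ[k] B) (ιH : H →ₐ[k] B)
    (e : A ⊗[k] H ≃ₗ[k] B) : Prop where
  isModAlg : IsModAlg k H A act
  e_tmul : ∀ (a : A) (h : H), e (a ⊗ₜ[k] h) = ιA a * ιH h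
  straighten :
    LinearMap.mul' k B ∘ₗ TensorProduct.map ιH.toLinearMap ιA.toLinearMap
      = LinearMap.mul' k B
          ∘ₗ TensorProduct.map (ιA.toLinearMap ∘ₗ actU k H A act) ιH.toLinearMap
          ∘ₗ (TensorProduct.assoc k H A H).symm.toLinearMap
          ∘ₗ lTensor H (TensorProduct.comm k H A).toLinearMap
          ∘ₗ (TensorProduct.assoc k H H A).toLinearMap
          ∘ₗ rTensor A (Coalgebra.comul (R := k))

/-- The endomorphism `a ⋊ h ↦ (a ⋊ h₁) ψ(h₂)` of the smash product `B`. -/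
def inducedEnd (ιA : A →ₐ[k] B) (ιH : H →ₐ[k] B) (e : A ⊗[k] H ≃ₗ[k] B)
    (ψ : H →ₗ[k] B) : B →ₗ[k] B :=
  LinearMap.mul' k B
    ∘ₗ TensorProduct.map
        (LinearMap.mul' k B ∘ₗ TensorProduct.map ιA.toLinearMap ιH.toLinearMap) ψ
    ∘ₗ (TensorProduct.assoc k A H H).symm.toLinearMap
    ∘ₗ lTensor A (Coalgebra.comul (R := k))
    ∘ₗ e.symm.toLinearMap

/-- The space of `A`-bimodule endomorphisms of `B`, where `A` acts through `ιA`. -/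
def bimodEnd (ιA : A →ₐ[k] B) : Submodule k (B →ₗ[k] B) where
  carrier := {f | ∀ (a : A) (x : B), f (ιA a * x) = ιA a * f x ∧ f (x * ιA a) = f x * ιA a}
  add_mem' := by
    intro f g hf hg a x
    refine ⟨?_, ?_⟩ <;>
      simp [LinearMap.add_apply, (hf a x).1, (hg a x).1, (hf a x).2, (hg a x).2,
        mul_add, add_mul]
  zero_mem' := by intro a x; simp
  smul_mem' := by
    intro c f hf a x
    refine ⟨?_, ?_⟩ <;>
      simp [LinearMap.smul_apply, (hf a x).1, (hf a x).2, mul_smul_comm, smul_mul_assoc]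


/-- The map `h ↦ h₁ f(h₂)` on `H`, for a functional `f : H → k`. -/
def harp (f : H →ₗ[k] k) : H →ₗ[k] H :=
  (TensorProduct.rid k H).toLinearMap ∘ₗ lTensor H f ∘ₗ Coalgebra.comul

/-- The action of `u ∈ K` on the smash product `B = A ⋊ H`, `u · (a ⋊ h) = a ⋊ (h₁⟨u,h₂⟩)`,
where `K` pairs with `H` via `p`. -/
def kactL (K : Type*) [Ring K] [HopfAlgebra k K] (p : K →ₗ[k] H →ₗ[k] k)
    (e : A ⊗[k] H ≃ₗ[k] B) : K →ₗ[k] B →ₗ[k] B where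
  toFun u := e.toLinearMap ∘ₗ lTensor A (harp k H (p u)) ∘ₗ e.symm.toLinearMap
  map_add' u v := by
    have h1 : harp k H (p u + p v) = harp k H (p u) + harp k H (p v) := by
      simp [harp, LinearMap.lTensor_add, LinearMap.add_comp, LinearMap.comp_add]
    simp [map_add, h1, LinearMap.lTensor_add, LinearMap.add_comp, LinearMap.comp_add]
  map_smul' c u := by
    have h1 : harp k H (c • p u) = c • harp k H (p u) := by
      simp [harp, LinearMap.lTensor_smul, LinearMap.smul_comp, LinearMap.comp_smul]
    simp [map_smul, h1, LinearMap.lTensor_smul, LinearMap.smul_comp, LinearMap.comp_smul]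

section Aux
open Coalgebra

variable {k : Type*} [Field k] {H A B : Type*} [Ring H] [HopfAlgebra k H]
  [Ring A] [Algebra k A] [Ring B] [Algebra k B]

lemma harp_apply (f : H →ₗ[k] k) (h : H) (r : Coalgebra.Repr k h (H × H)) :
    harp k H f h = ∑ i ∈ r.index, f (r.right i) • r.left i := by
  simp only [harp, LinearMap.comp_apply]
  rw [← r.eq]
  simp [TensorProduct.rid_tmul]

lemma harp_counit : harp k H (Coalgebra.counit (R := k)) = LinearMap.id := by
  ext h
  simp only [harp, LinearMap.comp_apply, LinearMap.id_coe, id_eq,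
    LinearEquiv.coe_coe]
  rw [Coalgebra.lTensor_counit_comul]
  simp

lemma harp_one (f : H →ₗ[k] k) : harp k H f (1 : H) = f 1 • 1 := by
  simp [harp, Bialgebra.comul_one, Algebra.TensorProduct.one_def,
    TensorProduct.rid_tmul]

lemma harp_mul (f : H →ₗ[k] k) (x y : H) (rx : Coalgebra.Repr k x (H × H))
    (ry : Coalgebra.Repr k y (H × H)) :
    harp k H f (x * y) = ∑ j ∈ rx.index, ∑ l ∈ ry.index,
      f (rx.right j * ry.right l) • (rx.left j * ry.left l) := by
  simp only [harp, LinearMap.comp_apply, Bialgebra.comul_mul]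
  rw [← rx.eq, ← ry.eq, Finset.sum_mul_sum]
  simp [Algebra.TensorProduct.tmul_mul_tmul, TensorProduct.rid_tmul]

lemma conv_repr {C : Type*} [AddCommMonoid C] [Module k C] [CoalgebraStruct k C]
    (f g : C →ₗ[k] B) (w : C) (r : Coalgebra.Repr k w (C × C)) :
    conv k f g w = ∑ i ∈ r.index, f (r.left i) * g (r.right i) := by
  simp only [conv, LinearMap.comp_apply]
  rw [← r.eq]
  simp

end Aux
section Aux2
open Coalgebra

variable {k : Type*} [Field k] {H A B : Type*} [Ring H] [HopfAlgebra k H]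
  [Ring A] [Algebra k A] [Ring B] [Algebra k B]
  {act : H →ₗ[k] A →ₗ[k] A} {ιA : A →ₐ[k] B} {ιH : H →ₐ[k] B}
  {e : A ⊗[k] H ≃ₗ[k] B}

lemma straighten_pt (hs : IsSmash k H A B act ιA ιH e) (h : H) (b : A)
    (r : Coalgebra.Repr k h (H × H)) :
    ιH h * ιA b = ∑ i ∈ r.index, ιA (act (r.left i) b) * ιH (r.right i) := by
  have := LinearMap.congr_fun hs.straighten (h ⊗ₜ[k] b)
  simp only [LinearMap.comp_apply, TensorProduct.map_tmul, LinearMap.mul'_apply,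
    AlgHom.toLinearMap_apply, LinearMap.rTensor_tmul] at this
  rw [← r.eq] at this
  simpa [TensorProduct.sum_tmul, TensorProduct.assoc_tmul, TensorProduct.comm_tmul,
    actU, mul'_apply] using this

lemma mul_e (hs : IsSmash k H A B act ιA ιH e) (a b : A) (h g : H)
    (r : Coalgebra.Repr k h (H × H)) :
    e (a ⊗ₜ[k] h) * e (b ⊗ₜ[k] g)
      = ∑ i ∈ r.index, e ((a * act (r.left i) b) ⊗ₜ[k] (r.right i * g)) := by
  rw [hs.e_tmul, hs.e_tmul]
  have h1 : ιA a * ιH h * (ιA b * ιH g) = ιA a * (ιH h * ιA b) * ιH g := by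
    rw [mul_assoc, mul_assoc, mul_assoc, ← mul_assoc (ιH h)]
  rw [h1, straighten_pt hs h b r, Finset.mul_sum, Finset.sum_mul]
  refine Finset.sum_congr rfl fun i _ => ?_
  rw [hs.e_tmul, map_mul, map_mul, ← mul_assoc, ← mul_assoc]

end Aux2
section Aux3
open Coalgebra

variable {k : Type*} [Field k] {H A B : Type*} [Ring H] [HopfAlgebra k H]
  [Ring A] [Algebra k A] [Ring B] [Algebra k B]
  {K : Type*} [Ring K] [HopfAlgebra k K]

lemma kact_e (p : K →ₗ[k] H →ₗ[k] k) (e : A ⊗[k] H ≃ₗ[k] B) (u : K) (a : A) (h : H) :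
    kactL k H A B K p e u (e (a ⊗ₜ[k] h)) = e (a ⊗ₜ[k] harp k H (p u) h) := by
  simp [kactL]

lemma kact_pt (p : K →ₗ[k] H →ₗ[k] k) (e : A ⊗[k] H ≃ₗ[k] B) (u : K) (a : A) (h : H)
    (r : Coalgebra.Repr k h (H × H)) :
    kactL k H A B K p e u (e (a ⊗ₜ[k] h))
      = ∑ i ∈ r.index, p u (r.right i) • e (a ⊗ₜ[k] r.left i) := by
  rw [kact_e, harp_apply _ _ r]
  simp [TensorProduct.tmul_sum, TensorProduct.tmul_smul]

lemma pairing_mul (p : K →ₗ[k] H →ₗ[k] k)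
    (hmul' : ∀ h h' : H, p.flip (h * h') = conv k (p.flip h) (p.flip h'))
    (u : K) (x y : H) (ru : Coalgebra.Repr k u (K × K)) :
    p u (x * y) = ∑ i ∈ ru.index, p (ru.left i) x * p (ru.right i) y := by
  have := LinearMap.congr_fun (hmul' x y) u
  rw [conv_repr _ _ _ ru] at this
  simpa using this

end Aux3
section Aux4
open Coalgebra

variable {k : Type*} [Field k] {H A B : Type*} [Ring H] [HopfAlgebra k H]
  [Ring A] [Algebra k A] [Ring B] [Algebra k B]

/-- Auxiliary trilinear map `x ⊗ y ⊗ z ↦ f z • e ((a * (x • b)) ⊗ (y * G))`. -/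
def psiMap (act : H →ₗ[k] A →ₗ[k] A) (e : A ⊗[k] H ≃ₗ[k] B)
    (f : H →ₗ[k] k) (a b : A) (G : H) : H ⊗[k] (H ⊗[k] H) →ₗ[k] B :=
  e.toLinearMap ∘ₗ TensorProduct.map
    (LinearMap.mulLeft k a ∘ₗ act.flip b)
    ((TensorProduct.rid k H).toLinearMap
      ∘ₗ TensorProduct.map (LinearMap.mulRight k G) f)

lemma psiMap_apply (act : H →ₗ[k] A →ₗ[k] A) (e : A ⊗[k] H ≃ₗ[k] B)
    (f : H →ₗ[k] k) (a b : A) (G : H) (x y z : H) :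
    psiMap act e f a b G (x ⊗ₜ[k] (y ⊗ₜ[k] z))
      = f z • e ((a * act x b) ⊗ₜ[k] (y * G)) := by
  simp [psiMap, TensorProduct.rid_tmul, TensorProduct.tmul_smul]

lemma inner_key (act : H →ₗ[k] A →ₗ[k] A) (e : A ⊗[k] H ≃ₗ[k] B)
    (f : H →ₗ[k] k) (a b : A) (G : H) (h : H) (rh : Coalgebra.Repr k h (H × H))
    (r1 : (i : H × H) → Coalgebra.Repr k (rh.left i) (H × H))
    (r2 : (i : H × H) → Coalgebra.Repr k (rh.right i) (H × H)) :
    ∑ m ∈ rh.index, ∑ j ∈ (r2 m).index,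
      f ((r2 m).right j) • e ((a * act (rh.left m) b) ⊗ₜ[k] ((r2 m).left j * G))
    = ∑ m ∈ rh.index, ∑ j ∈ (r1 m).index,
      f (rh.right m) • e ((a * act ((r1 m).left j) b) ⊗ₜ[k] ((r1 m).right j * G)) := by
  have hco := Coalgebra.sum_tmul_tmul_eq (R := k) rh r1 r2
  have h2 := congrArg (psiMap act e f a b G) hco
  simpa only [map_sum, psiMap_apply] using h2.symm

end Aux4
section Aux5
open Coalgebra

variable {k : Type*} [Field k] {H A B : Type*} [Ring H] [HopfAlgebra k H]
  [Ring A] [Algebra k A] [Ring B] [Algebra k B]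
  {K : Type*} [Ring K] [HopfAlgebra k K]

private lemma sum_reorder₃ {M : Type*} [AddCommMonoid M] {α β γ : Type*}
    (s : Finset α) (t : Finset β) (v : Finset γ) (F : α → β → γ → M) :
    ∑ j ∈ s, ∑ l ∈ t, ∑ i ∈ v, F j l i
      = ∑ i ∈ v, ∑ l ∈ t, ∑ j ∈ s, F j l i :=
  calc ∑ j ∈ s, ∑ l ∈ t, ∑ i ∈ v, F j l i
      = ∑ l ∈ t, ∑ j ∈ s, ∑ i ∈ v, F j l i := Finset.sum_comm
    _ = ∑ l ∈ t, ∑ i ∈ v, ∑ j ∈ s, F j l i :=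
        Finset.sum_congr rfl fun l _ => Finset.sum_comm
    _ = ∑ i ∈ v, ∑ l ∈ t, ∑ j ∈ s, F j l i := Finset.sum_comm

private lemma sum_reorder₄ {M : Type*} [AddCommMonoid M] {α γ δ : Type*}
    {β : α → Type*} (s : Finset α) (t : (a : α) → Finset (β a)) (w : Finset γ)
    (v : Finset δ) (F : (a : α) → β a → γ → δ → M) :
    ∑ m ∈ s, ∑ j ∈ t m, ∑ l ∈ w, ∑ i ∈ v, F m j l i
      = ∑ i ∈ v, ∑ l ∈ w, ∑ m ∈ s, ∑ j ∈ t m, F m j l i :=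
  calc ∑ m ∈ s, ∑ j ∈ t m, ∑ l ∈ w, ∑ i ∈ v, F m j l i
      = ∑ m ∈ s, ∑ i ∈ v, ∑ l ∈ w, ∑ j ∈ t m, F m j l i :=
        Finset.sum_congr rfl fun m _ => sum_reorder₃ _ _ _ _
    _ = ∑ i ∈ v, ∑ m ∈ s, ∑ l ∈ w, ∑ j ∈ t m, F m j l i := Finset.sum_comm
    _ = ∑ i ∈ v, ∑ l ∈ w, ∑ m ∈ s, ∑ j ∈ t m, F m j l i :=
        Finset.sum_congr rfl fun i _ => Finset.sum_comm

lemma key (act : H →ₗ[k] A →ₗ[k] A) (ιA : A →ₐ[k] B) (ιH : H →ₐ[k] B)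
    (e : A ⊗[k] H ≃ₗ[k] B) (hs : IsSmash k H A B act ιA ιH e)
    (p : K →ₗ[k] H →ₗ[k] k)
    (hmul' : ∀ h h' : H, p.flip (h * h') = conv k (p.flip h) (p.flip h'))
    (u : K) (ru : Coalgebra.Repr k u (K × K)) (a b : A) (h g : H) :
    kactL k H A B K p e u (e (a ⊗ₜ[k] h) * e (b ⊗ₜ[k] g))
      = ∑ i ∈ ru.index,
          kactL k H A B K p e (ru.left i) (e (a ⊗ₜ[k] h))
            * kactL k H A B K p e (ru.right i) (e (b ⊗ₜ[k] g)) := by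
  classical
  set rh := Coalgebra.Repr.arbitrary k h with hrh
  set rg := Coalgebra.Repr.arbitrary k g with hrg
  set r1 : (m : H × H) → Coalgebra.Repr k (rh.left m) (H × H) :=
    fun m => Coalgebra.Repr.arbitrary k (rh.left m) with hr1
  set r2 : (m : H × H) → Coalgebra.Repr k (rh.right m) (H × H) :=
    fun m => Coalgebra.Repr.arbitrary k (rh.right m) with hr2
  -- Left-hand side
  have hL : kactL k H A B K p e u (e (a ⊗ₜ[k] h) * e (b ⊗ₜ[k] g))
      = ∑ m ∈ rh.index, ∑ j ∈ (r2 m).index, ∑ l ∈ rg.index, ∑ i ∈ ru.index,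
          (p (ru.left i) ((r2 m).right j) * p (ru.right i) (rg.right l)) •
            e ((a * act (rh.left m) b) ⊗ₜ[k] ((r2 m).left j * rg.left l)) := by
    rw [mul_e hs a b h g rh, map_sum]
    refine Finset.sum_congr rfl fun m _ => ?_
    rw [kact_e, harp_mul (p u) _ _ (r2 m) rg]
    rw [TensorProduct.tmul_sum, map_sum]
    refine Finset.sum_congr rfl fun j _ => ?_
    rw [TensorProduct.tmul_sum, map_sum]
    refine Finset.sum_congr rfl fun l _ => ?_
    rw [TensorProduct.tmul_smul, map_smul, pairing_mul p hmul' u _ _ ru,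
      Finset.sum_smul]
  -- Right-hand side
  have hR : ∑ i ∈ ru.index,
        kactL k H A B K p e (ru.left i) (e (a ⊗ₜ[k] h))
          * kactL k H A B K p e (ru.right i) (e (b ⊗ₜ[k] g))
      = ∑ i ∈ ru.index, ∑ m ∈ rh.index, ∑ l ∈ rg.index, ∑ j ∈ (r1 m).index,
          (p (ru.left i) (rh.right m) * p (ru.right i) (rg.right l)) •
            e ((a * act ((r1 m).left j) b) ⊗ₜ[k] ((r1 m).right j * rg.left l)) := by
    refine Finset.sum_congr rfl fun i _ => ?_
    rw [kact_pt p e _ a h rh, kact_pt p e _ b g rg, Finset.sum_mul_sum]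
    refine Finset.sum_congr rfl fun m _ => ?_
    refine Finset.sum_congr rfl fun l _ => ?_
    rw [smul_mul_assoc, mul_smul_comm, mul_e hs a b _ _ (r1 m), Finset.smul_sum,
      Finset.smul_sum]
    simp only [smul_smul]
  rw [hL, hR, sum_reorder₄]
  refine Finset.sum_congr rfl fun i _ => ?_
  conv_rhs => rw [Finset.sum_comm]
  refine Finset.sum_congr rfl fun l _ => ?_
  have lhs_eq : ∑ m ∈ rh.index, ∑ j ∈ (r2 m).index,
      (p (ru.left i) ((r2 m).right j) * p (ru.right i) (rg.right l)) •
        e ((a * act (rh.left m) b) ⊗ₜ[k] ((r2 m).left j * rg.left l))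
      = p (ru.right i) (rg.right l) •
          ∑ m ∈ rh.index, ∑ j ∈ (r2 m).index,
            p (ru.left i) ((r2 m).right j) •
              e ((a * act (rh.left m) b) ⊗ₜ[k] ((r2 m).left j * rg.left l)) := by
    rw [Finset.smul_sum]
    refine Finset.sum_congr rfl fun m _ => ?_
    rw [Finset.smul_sum]
    refine Finset.sum_congr rfl fun j _ => ?_
    rw [smul_smul, mul_comm]
  have rhs_eq : ∑ m ∈ rh.index, ∑ j ∈ (r1 m).index,
      (p (ru.left i) (rh.right m) * p (ru.right i) (rg.right l)) •
        e ((a * act ((r1 m).left j) b) ⊗ₜ[k] ((r1 m).right j * rg.left l))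
      = p (ru.right i) (rg.right l) •
          ∑ m ∈ rh.index, ∑ j ∈ (r1 m).index,
            p (ru.left i) (rh.right m) •
              e ((a * act ((r1 m).left j) b) ⊗ₜ[k] ((r1 m).right j * rg.left l)) := by
    rw [Finset.smul_sum]
    refine Finset.sum_congr rfl fun m _ => ?_
    rw [Finset.smul_sum]
    refine Finset.sum_congr rfl fun j _ => ?_
    rw [smul_smul, mul_comm]
  rw [lhs_eq, rhs_eq, inner_key act e (p (ru.left i)) a b (rg.left l) h rh r1 r2]

end Aux5
section Aux6
open Coalgebra

variable {k : Type*} [Field k] {H A B : Type*} [Ring H] [HopfAlgebra k H]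
  [Ring A] [Algebra k A] [Ring B] [Algebra k B]

/-- Auxiliary trilinear map `x ⊗ y ⊗ z ↦ (f y * g z) • x`. -/
def psiMap₂ (f g : H →ₗ[k] k) : H ⊗[k] (H ⊗[k] H) →ₗ[k] H :=
  (TensorProduct.rid k H).toLinearMap
    ∘ₗ lTensor H (LinearMap.mul' k k ∘ₗ TensorProduct.map f g)

lemma psiMap₂_apply (f g : H →ₗ[k] k) (x y z : H) :
    psiMap₂ f g (x ⊗ₜ[k] (y ⊗ₜ[k] z)) = (f y * g z) • x := by
  simp [psiMap₂, TensorProduct.rid_tmul]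

lemma harp_conv (f g : H →ₗ[k] k) :
    harp k H (conv k f g) = harp k H f ∘ₗ harp k H g := by
  ext h
  set rh := Coalgebra.Repr.arbitrary k h with hrh
  set r1 : (m : H × H) → Coalgebra.Repr k (rh.left m) (H × H) :=
    fun m => Coalgebra.Repr.arbitrary k (rh.left m) with hr1
  set r2 : (m : H × H) → Coalgebra.Repr k (rh.right m) (H × H) :=
    fun m => Coalgebra.Repr.arbitrary k (rh.right m) with hr2
  have hL : harp k H (conv k f g) h
      = ∑ m ∈ rh.index, ∑ j ∈ (r2 m).index,
          (f ((r2 m).left j) * g ((r2 m).right j)) • rh.left m := by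
    rw [harp_apply _ _ rh]
    refine Finset.sum_congr rfl fun m _ => ?_
    rw [conv_repr f g _ (r2 m), Finset.sum_smul]
  have hR : harp k H f (harp k H g h)
      = ∑ m ∈ rh.index, ∑ j ∈ (r1 m).index,
          (f ((r1 m).right j) * g (rh.right m)) • (r1 m).left j := by
    rw [harp_apply g _ rh, map_sum]
    refine Finset.sum_congr rfl fun m _ => ?_
    rw [map_smul, harp_apply f _ (r1 m), Finset.smul_sum]
    refine Finset.sum_congr rfl fun j _ => ?_
    rw [smul_smul, mul_comm]
  have hco := Coalgebra.sum_tmul_tmul_eq (R := k) rh r1 r2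
  have h2 := congrArg (psiMap₂ f g) hco
  simp only [map_sum, psiMap₂_apply] at h2
  simp only [LinearMap.comp_apply]
  rw [hL, hR, h2]

end Aux6

/-- If `K` is a Hopf algebra in duality with `H` via `p`, the action
`u · (a ⋊ h) = a ⋊ h₁⟨u,h₂⟩` makes the smash product `A ⋊ H` a left `K`-module algebra
whose invariants contain `A ⋊ 1`. -/
theorem stmt7 (act : H →ₗ[k] A →ₗ[k] A) (ιA : A →ₐ[k] B) (ιH : H →ₐ[k] B)
    (e : A ⊗[k] H ≃ₗ[k] B) (hs : IsSmash k H A B act ιA ιH e)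
    (K : Type*) [Ring K] [HopfAlgebra k K] (p : K →ₗ[k] H →ₗ[k] k)
    (hmul : ∀ u v : K, p (u * v) = conv k (p u) (p v))
    (hmul' : ∀ h h' : H, p.flip (h * h') = conv k (p.flip h) (p.flip h'))
    (hone : p 1 = Coalgebra.counit (R := k))
    (hone' : ∀ u : K, p u 1 = Coalgebra.counit (R := k) u) :
    IsModAlg k K B (kactL k H A B K p e)
    ∧ ∀ (u : K) (a : A),
        kactL k H A B K p e u (ιA a) = Coalgebra.counit (R := k) u • ιA a := by
  have kact1 : ∀ (u : K) (a : A) (h : H),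
      kactL k H A B K p e u (e (a ⊗ₜ[k] h)) = e (a ⊗ₜ[k] harp k H (p u) h) :=
    kact_e p e
  constructor
  · refine ⟨?_, ?_, ?_, ?_⟩
    · -- act_one
      apply LinearMap.ext fun x => ?_
      simp [kactL, hone, harp_counit]
    · -- act_mul
      intro u v
      apply LinearMap.ext fun x => ?_
      simp [kactL, hmul u v, harp_conv, LinearMap.lTensor_comp]
    · -- smul_mul
      apply TensorProduct.ext'
      intro u z
      induction z using TensorProduct.induction_on with
      | zero => simp only [TensorProduct.tmul_zero, map_zero]
      | add z₁ z₂ h1 h2 => simp only [TensorProduct.tmul_add, map_add, h1, h2]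
      | tmul x y =>
        set ru := Coalgebra.Repr.arbitrary k u with hru
        have main : ∀ (za zb : A ⊗[k] H),
            kactL k H A B K p e u (e za * e zb)
              = ∑ i ∈ ru.index,
                  kactL k H A B K p e (ru.left i) (e za)
                    * kactL k H A B K p e (ru.right i) (e zb) := by
          intro za zb
          induction za using TensorProduct.induction_on with
          | zero => simp
          | add x₁ x₂ h1 h2 =>
            simp only [map_add, add_mul, h1, h2, Finset.sum_add_distrib]
          | tmul a h' =>
            induction zb using TensorProduct.induction_on with
            | zero => simp
            | add y₁ y₂ h1 h2 =>
              simp only [map_add, mul_add, h1, h2, Finset.sum_add_distrib]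
            | tmul b g' => exact key act ιA ιH e hs p hmul' u ru a b h' g'
        have hx := (e.apply_symm_apply x).symm
        have hy := (e.apply_symm_apply y).symm
        rw [hx, hy]
        have expand := main (e.symm x) (e.symm y)
        simp only [LinearMap.comp_apply, lTensor_tmul, LinearMap.mul'_apply,
          LinearMap.rTensor_tmul]
        rw [← ru.eq]
        simp only [TensorProduct.sum_tmul, map_sum,
          TensorProduct.tensorTensorTensorComm_tmul, TensorProduct.map_tmul,
          LinearMap.mul'_apply, actU, TensorProduct.lift.tmul]
        exact expand
    · -- smul_one
      intro u
      have h1 : (1 : B) = e ((1 : A) ⊗ₜ[k] (1 : H)) := by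
        rw [hs.e_tmul]; simp
      rw [h1, kact1, harp_one, hone' u, TensorProduct.tmul_smul, map_smul, ← h1]
  · -- invariance of A ⋊ 1
    intro u a
    have h1 : ιA a = e (a ⊗ₜ[k] (1 : H)) := by
      rw [hs.e_tmul]; simp
    rw [h1, kact1, harp_one, hone' u, TensorProduct.tmul_smul, map_smul, ← h1]

end
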